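/- arXiv:2007.08322 — 5 statements merged into one kernel-verified Lean document; each statement's English description precedes it below -/
import Mathlib

section
/- Let β' > 0 and η > 0 with ηβ' ≤ 4. Consider sequences w_{t+1} = w_t·(1 + η(β' - β_t)), v_{t+1} = v_t·(1 - η(β' - β_t)), β_t = w_t² - v_t². If 0 ≤ β_t < β', then β_{t+1} ≥ β_t. -/
/-- Monotonicity of the one-dimensional over-parameterized gradient descent iterate
`β_t = w_t² - v_t²` while it is below the target `β'`, provided `η·β' ≤ 4`. -/
theorem overparam_monotone
    (β' η : ℝ) (hβ' : 0 < β') (hη : 0 < η) (hηβ : η * β' ≤ 4)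
    (w v β : ℕ → ℝ)
    (hβdef : ∀ t, β t = (w t) ^ 2 - (v t) ^ 2)
    (hwrec : ∀ t, w (t + 1) = w t * (1 + η * (β' - β t)))
    (hvrec : ∀ t, v (t + 1) = v t * (1 - η * (β' - β t)))
    (t : ℕ) (hlow : 0 ≤ β t) (hhigh : β t < β') :
    β t ≤ β (t + 1) := by
  have h1 := hβdef t
  have h2 := hβdef (t + 1)
  rw [hwrec t, hvrec t] at h2
  have ha : 0 < η * (β' - β t) := mul_pos hη (sub_pos.mpr hhigh)
  nlinarith [sq_nonneg (w t), sq_nonneg (v t), mul_pos ha ha,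
    mul_nonneg (le_of_lt ha) hlow, mul_nonneg (mul_nonneg (le_of_lt ha) (le_of_lt ha)) hlow]
end

section
/- Let X and Y be real-valued random variables with E[Y⁴] ≤ M and E[X⁴] ≤ M for some M > 0. For τ > 0, define the truncations Y̌ = sign(Y)·min(|Y|, τ) and X̌ = sign(X)·min(|X|, τ). Then |E[Y̌·X̌] - E[Y·X]| ≤ √2·M/τ². -/
/-!
Write `y̌ = sign y · min(|y|, τ)`. Pointwise, `|y̌x̌ - yx| ≤ |y||x| - min(|y|, τ) min(|x|, τ)`, which
vanishes unless `|y| > τ` or `|x| > τ`; if, say, `|x| > τ`, it is at most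
`|y||x| ≤ |y||x|³/τ² ≤ (y⁴ + x⁴)/(√2 τ²)`. Integrating this pointwise bound against the two
fourth-moment bounds gives `2M/(√2 τ²) = √2 M/τ²`.
-/

open MeasureTheory
open scoped ProbabilityTheory

noncomputable def truncate (τ y : ℝ) : ℝ := Real.sign y * min |y| τ

theorem Real.sign_mul_abs (y : ℝ) : Real.sign y * |y| = y := by
  rcases lt_trichotomy y 0 with hy | rfl | hy
  · rw [Real.sign_of_neg hy, abs_of_neg hy]; ring
  · simp
  · rw [Real.sign_of_pos hy, abs_of_pos hy, one_mul]

section Truncate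

variable {τ : ℝ}

theorem truncate_eq_max_min (hτ : 0 ≤ τ) (y : ℝ) : truncate τ y = max (-τ) (min y τ) := by
  rcases lt_trichotomy y 0 with hy | rfl | hy
  · rw [truncate, Real.sign_of_neg hy, abs_of_neg hy, min_eq_left (show y ≤ τ by linarith)]
    rcases le_total (-y) τ with h | h
    · rw [min_eq_left h, max_eq_right (by linarith)]; ring
    · rw [min_eq_right h, max_eq_left (by linarith)]; ring
  · simp [truncate, hτ]
  · rw [truncate, Real.sign_of_pos hy, abs_of_pos hy, one_mul,
      max_eq_right (le_trans (by linarith) (le_min hy.le hτ))]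

theorem measurable_truncate (hτ : 0 ≤ τ) : Measurable (truncate τ) := by
  simp only [funext (truncate_eq_max_min hτ)]
  fun_prop

theorem abs_truncate_le (hτ : 0 ≤ τ) (y : ℝ) : |truncate τ y| ≤ τ := by
  rw [truncate_eq_max_min hτ, abs_le]
  exact ⟨le_max_left _ _, max_le (by linarith) (min_le_right _ _)⟩

theorem abs_truncate_mul_truncate_sub_mul_le (hτ : 0 ≤ τ) (y x : ℝ) :
    |truncate τ y * truncate τ x - y * x| ≤ |y| * |x| - min |y| τ * min |x| τ := by
  have hsign : |Real.sign y * Real.sign x| ≤ 1 := by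
    rcases Real.sign_apply_eq y with hy | hy | hy <;>
      rcases Real.sign_apply_eq x with hx | hx | hx <;> norm_num [hy, hx]
  have hmin : min |y| τ * min |x| τ ≤ |y| * |x| :=
    mul_le_mul (min_le_left _ _) (min_le_left _ _) (le_min (abs_nonneg x) hτ) (abs_nonneg y)
  have hfactor : truncate τ y * truncate τ x - y * x
      = Real.sign y * Real.sign x * (min |y| τ * min |x| τ - |y| * |x|) := by
    have hyx : y * x = Real.sign y * |y| * (Real.sign x * |x|) := by
      rw [Real.sign_mul_abs, Real.sign_mul_abs]
    rw [truncate, truncate, hyx]; ring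
  rw [hfactor, abs_mul, abs_sub_comm, abs_of_nonneg (sub_nonneg.2 hmin)]
  exact mul_le_of_le_one_left (sub_nonneg.2 hmin) hsign

end Truncate

-- The optimal constant is `4 / 27 ^ (1/4) ≈ 1.75`; the cruder `3 / 2` still exceeds `√2`.
theorem sqrt_two_mul_mul_pow_three_le (a b : ℝ) : √2 * (a * b ^ 3) ≤ a ^ 4 + b ^ 4 := by
  have hsqrt : √2 ≤ 3 / 2 := by
    rw [Real.sqrt_le_left (by norm_num)]; norm_num
  have hthree_halves : 3 / 2 * (a * b ^ 3) ≤ a ^ 4 + b ^ 4 := by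
    nlinarith [sq_nonneg (a - b), sq_nonneg (a ^ 2 - b ^ 2), sq_nonneg (2 * a ^ 2 - b ^ 2)]
  rcases le_total 0 (a * b ^ 3) with h | h
  · exact (mul_le_mul_of_nonneg_right hsqrt h).trans hthree_halves
  · exact (mul_nonpos_of_nonneg_of_nonpos (Real.sqrt_nonneg 2) h).trans (by positivity)

theorem mul_le_pow_four_add_div_of_lt {a b τ : ℝ} (ha : 0 ≤ a) (hτ : 0 < τ) (hτb : τ < b) :
    a * b ≤ (a ^ 4 + b ^ 4) / (√2 * τ ^ 2) := by
  have hsq : τ ^ 2 ≤ b ^ 2 := pow_le_pow_left₀ hτ.le hτb.le 2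
  rw [le_div_iff₀ (by positivity)]
  calc a * b * (√2 * τ ^ 2) ≤ a * b * (√2 * b ^ 2) :=
        mul_le_mul_of_nonneg_left (by gcongr) (mul_nonneg ha (by linarith))
    _ = √2 * (a * b ^ 3) := by ring
    _ ≤ a ^ 4 + b ^ 4 := sqrt_two_mul_mul_pow_three_le a b

theorem mul_sub_min_mul_min_le {a b τ : ℝ} (ha : 0 ≤ a) (hb : 0 ≤ b) (hτ : 0 < τ) :
    a * b - min a τ * min b τ ≤ (a ^ 4 + b ^ 4) / (√2 * τ ^ 2) := by
  have hmin : 0 ≤ min a τ * min b τ := mul_nonneg (le_min ha hτ.le) (le_min hb hτ.le)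
  by_cases haτ : a ≤ τ
  · by_cases hbτ : b ≤ τ
    · rw [min_eq_left haτ, min_eq_left hbτ, sub_self]; positivity
    · linarith [mul_le_pow_four_add_div_of_lt ha hτ (not_le.1 hbτ)]
  · have := mul_le_pow_four_add_div_of_lt hb hτ (not_le.1 haτ)
    rw [mul_comm, add_comm] at this
    linarith

theorem abs_truncate_mul_truncate_sub_mul_le_pow_four {τ : ℝ} (hτ : 0 < τ) (y x : ℝ) :
    |truncate τ y * truncate τ x - y * x| ≤ (y ^ 4 + x ^ 4) / (√2 * τ ^ 2) := by
  calc |truncate τ y * truncate τ x - y * x|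
      ≤ |y| * |x| - min |y| τ * min |x| τ := abs_truncate_mul_truncate_sub_mul_le hτ.le y x
    _ ≤ (|y| ^ 4 + |x| ^ 4) / (√2 * τ ^ 2) := mul_sub_min_mul_min_le (abs_nonneg y) (abs_nonneg x) hτ
    _ = (y ^ 4 + x ^ 4) / (√2 * τ ^ 2) := by
      have h4 : Even 4 := by norm_num
      rw [h4.pow_abs, h4.pow_abs]

theorem integrable_truncate_mul_truncate {Ω : Type*} [MeasurableSpace Ω] {μ : Measure Ω}
    [IsFiniteMeasure μ] {X Y : Ω → ℝ} (hX : AEMeasurable X μ) (hY : AEMeasurable Y μ) {τ : ℝ}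
    (hτ : 0 ≤ τ) : Integrable (fun ω => truncate τ (Y ω) * truncate τ (X ω)) μ := by
  refine Integrable.of_bound
    (((measurable_truncate hτ).comp_aemeasurable hY).mul
      ((measurable_truncate hτ).comp_aemeasurable hX)).aestronglyMeasurable (τ * τ)
    (ae_of_all _ fun ω => ?_)
  rw [Real.norm_eq_abs, abs_mul]
  exact mul_le_mul (abs_truncate_le hτ _) (abs_truncate_le hτ _) (abs_nonneg _) hτ

theorem truncation_bias_bound_general
    {Ω : Type*} [MeasureSpace Ω] [IsProbabilityMeasure (ℙ : Measure Ω)]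
    (X Y : Ω → ℝ) (hX : Measurable X) (hY : Measurable Y)
    (M τ : ℝ) (hτ : 0 < τ)
    (hY4int : Integrable (fun ω => (Y ω) ^ 4))
    (hX4int : Integrable (fun ω => (X ω) ^ 4))
    (hXYint : Integrable (fun ω => Y ω * X ω))
    (hY4 : ∫ ω, (Y ω) ^ 4 ≤ M) (hX4 : ∫ ω, (X ω) ^ 4 ≤ M) :
    |(∫ ω, (Real.sign (Y ω) * min |Y ω| τ) * (Real.sign (X ω) * min |X ω| τ)) -
        ∫ ω, Y ω * X ω| ≤ Real.sqrt 2 * M / τ ^ 2 := by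
  change |(∫ ω, truncate τ (Y ω) * truncate τ (X ω)) - _| ≤ _
  rw [← integral_sub (integrable_truncate_mul_truncate hX.aemeasurable hY.aemeasurable hτ.le)
    hXYint]
  calc |∫ ω, (truncate τ (Y ω) * truncate τ (X ω) - Y ω * X ω)|
      ≤ ∫ ω, |truncate τ (Y ω) * truncate τ (X ω) - Y ω * X ω| :=
        abs_integral_le_integral_abs
    _ ≤ ∫ ω, (Y ω ^ 4 + X ω ^ 4) / (√2 * τ ^ 2) :=
        integral_mono_of_nonneg (ae_of_all _ fun _ => abs_nonneg _)
          ((hY4int.add hX4int).div_const _)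
          (ae_of_all _ fun ω => abs_truncate_mul_truncate_sub_mul_le_pow_four hτ (Y ω) (X ω))
    _ = ((∫ ω, Y ω ^ 4) + ∫ ω, X ω ^ 4) / (√2 * τ ^ 2) := by
        rw [integral_div, integral_add hY4int hX4int]
    _ ≤ (M + M) / (√2 * τ ^ 2) := by gcongr
    _ = √2 * M / τ ^ 2 := by
        field_simp
        rw [Real.sq_sqrt zero_le_two]; ring

/-- Bias bound for elementwise truncation (winsorization) under fourth-moment
conditions: for `Y̌ = sign(Y)·min(|Y|, τ)` and `X̌ = sign(X)·min(|X|, τ)`,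
`|E[Y̌·X̌] - E[Y·X]| ≤ √2·M/τ²`. -/
theorem truncation_bias_bound
    {Ω : Type*} [MeasureSpace Ω] [IsProbabilityMeasure (ℙ : Measure Ω)]
    (X Y : Ω → ℝ) (hX : Measurable X) (hY : Measurable Y)
    (M τ : ℝ) (hM : 0 < M) (hτ : 0 < τ)
    (hY4int : Integrable (fun ω => (Y ω) ^ 4))
    (hX4int : Integrable (fun ω => (X ω) ^ 4))
    (hXYint : Integrable (fun ω => Y ω * X ω))
    (hY4 : ∫ ω, (Y ω) ^ 4 ≤ M) (hX4 : ∫ ω, (X ω) ^ 4 ≤ M) :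
    |(∫ ω, (Real.sign (Y ω) * min |Y ω| τ) * (Real.sign (X ω) * min |X ω| τ)) -
        ∫ ω, Y ω * X ω| ≤ Real.sqrt 2 * M / τ ^ 2 :=
  truncation_bias_bound_general X Y hX hY M τ hτ hY4int hX4int hXYint hY4 hX4
end

section
/- Let B ~ Binomial(n, q) with 0 < q ≤ 1 and n ≥ 1. Then E[1_{B > 0}/B] ≤ 2/((n+1)q). -/
/-- Inverse-moment bound for the binomial distribution: if `B ~ Binomial(n, q)` with
`0 < q ≤ 1` and `n ≥ 1`, then `E[1_{B>0}/B] ≤ 2/((n+1)q)`, stated via the explicit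
binomial expectation sum. -/
theorem binomial_inverse_moment
    (n : ℕ) (hn : 1 ≤ n) (q : ℝ) (hq0 : 0 < q) (hq1 : q ≤ 1) :
    ∑ k ∈ Finset.range (n + 1),
        (if 0 < k then (1 : ℝ) / k else 0) * (n.choose k : ℝ) * q ^ k * (1 - q) ^ (n - k) ≤
      2 / (((n : ℝ) + 1) * q) := by
  have hp0 : (0:ℝ) ≤ 1 - q := by linarith
  set f : ℕ → ℝ := fun j => ((n+1).choose j : ℝ) * q ^ j * (1 - q) ^ (n + 1 - j) with hf
  have hfnn : ∀ j, 0 ≤ f j := fun j => by positivity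
  -- termwise bound
  have hterm : ∀ k ∈ Finset.range (n + 1),
      (if 0 < k then (1 : ℝ) / k else 0) * (n.choose k : ℝ) * q ^ k * (1 - q) ^ (n - k)
        ≤ (2 / (((n : ℝ) + 1) * q)) * f (k + 1) := by
    intro k hk
    rcases Nat.eq_zero_or_pos k with hk0 | hkpos
    · subst hk0
      simp only [lt_irrefl, if_false, zero_mul]
      have : 0 ≤ f 1 := hfnn 1
      positivity
    · rw [if_pos hkpos]
      have hsub : n + 1 - (k + 1) = n - k := by omega
      have hchoose : ((n+1).choose (k+1) : ℝ) * (k+1) = ((n:ℝ)+1) * (n.choose k) := by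
        have := Nat.add_one_mul_choose_eq n k
        exact_mod_cast congrArg (Nat.cast : ℕ → ℝ) this.symm
      have hfval : f (k+1) = ((n+1).choose (k+1) : ℝ) * q ^ (k+1) * (1 - q) ^ (n - k) := by
        rw [hf]; simp [hsub]
      rw [hfval]
      have hk1 : (1:ℝ) ≤ (k:ℝ) := by exact_mod_cast hkpos
      have hkpos' : (0:ℝ) < k := by linarith
      have hn1 : (0:ℝ) < (n:ℝ) + 1 := by positivity
      -- reduce to: (1/k) * C(n,k) ≤ 2/((n+1)q) * C(n+1,k+1) * q
      have hC : ((n+1).choose (k+1) : ℝ) = ((n:ℝ)+1) * (n.choose k) / ((k:ℝ)+1) := by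
        field_simp at hchoose ⊢
        linarith [hchoose]
      rw [hC, pow_succ]
      have hq' : q ^ k * (1-q) ^ (n-k) ≥ 0 := by positivity
      have key : (1:ℝ)/k * (n.choose k) ≤ 2 / (((n:ℝ)+1)*q) * (((n:ℝ)+1) * (n.choose k) / ((k:ℝ)+1) * q) := by
        have h2 : 2 / (((n:ℝ)+1)*q) * (((n:ℝ)+1) * (n.choose k) / ((k:ℝ)+1) * q)
            = 2 * (n.choose k) / ((k:ℝ)+1) := by
          field_simp
        rw [h2, div_mul_eq_mul_div, div_le_div_iff₀ hkpos' (by linarith : (0:ℝ) < (k:ℝ)+1)]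
        have hcnn : (0:ℝ) ≤ (n.choose k : ℝ) := Nat.cast_nonneg _
        nlinarith
      calc (1:ℝ)/k * (n.choose k) * q ^ k * (1 - q) ^ (n - k)
          = ((1:ℝ)/k * (n.choose k)) * (q ^ k * (1-q)^(n-k)) := by ring
        _ ≤ (2 / (((n:ℝ)+1)*q) * (((n:ℝ)+1) * (n.choose k) / ((k:ℝ)+1) * q)) * (q ^ k * (1-q)^(n-k)) := by
            apply mul_le_mul_of_nonneg_right key hq'
        _ = 2 / (((n:ℝ)+1)*q) * (((n:ℝ)+1) * (n.choose k) / ((k:ℝ)+1) * (q ^ k * q) * (1-q)^(n-k)) := by ring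
  have hstep1 := Finset.sum_le_sum hterm
  rw [← Finset.mul_sum] at hstep1
  -- the shifted sum is ≤ 1
  have hsum1 : ∑ j ∈ Finset.range (n + 2), f j = 1 := by
    have h := add_pow q (1 - q) (n + 1)
    have heq : ∑ j ∈ Finset.range (n + 2), f j = (q + (1 - q)) ^ (n + 1) := by
      rw [h]
      exact Finset.sum_congr rfl (fun j _ => by rw [hf]; ring)
    rw [heq]
    norm_num
  have hshift : ∑ k ∈ Finset.range (n + 1), f (k + 1) ≤ 1 := by
    rw [← hsum1, Finset.sum_range_succ' f (n+1)]
    nlinarith [hfnn 0]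
  have hcoef : (0:ℝ) ≤ 2 / (((n:ℝ)+1)*q) := by positivity
  calc _ ≤ 2 / (((n:ℝ)+1)*q) * ∑ k ∈ Finset.range (n + 1), f (k + 1) := hstep1
    _ ≤ 2 / (((n:ℝ)+1)*q) * 1 := mul_le_mul_of_nonneg_left hshift hcoef
    _ = 2 / (((n:ℝ)+1)*q) := mul_one _
end

section
/- Let β' ∈ ℝ with β' > 0, η > 0, and let m ≥ 0 be an integer. Consider w_{t+1}² ≤ (1 + ηβ'/2^m)²·w_t² and v_{t+1}² ≥ (1 - ηβ'/2^m)²·v_t², with β_t = w_t² - v_t². If (1 - 1/2^m)β' ≤ β_t ≤ (1 - 1/2^{m+1})β', v_t² ≤ α², and η and α satisfy η·β' ≤ 1/12 and α² ≤ η·β'²·2^{-(m+3)}, then β_{t+1} ≤ β'. -/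
set_option maxHeartbeats 1000000 in
/-- Upper-barrier step in the multi-stage trajectory analysis: once the iterate
`β_t = w_t² - v_t²` is within the dyadic band `[(1 - 2⁻ᵐ)β', (1 - 2⁻⁽ᵐ⁺¹⁾)β']`,
the next iterate never exceeds `β'` under the stated conditions on `η` and `α`. -/
theorem barrier_step
    (β' η α : ℝ) (hβ' : 0 < β') (hη : 0 < η) (m : ℕ)
    (w v wnext vnext : ℝ)
    (hwnext : wnext ^ 2 ≤ (1 + η * β' / 2 ^ m) ^ 2 * w ^ 2)
    (hvnext : (1 - η * β' / 2 ^ m) ^ 2 * v ^ 2 ≤ vnext ^ 2)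
    (hband_lo : (1 - 1 / 2 ^ m) * β' ≤ w ^ 2 - v ^ 2)
    (hband_hi : w ^ 2 - v ^ 2 ≤ (1 - 1 / 2 ^ (m + 1)) * β')
    (hv : v ^ 2 ≤ α ^ 2)
    (hηβ : η * β' ≤ 1 / 12)
    (hα : α ^ 2 ≤ η * β' ^ 2 / 2 ^ (m + 3)) :
    wnext ^ 2 - vnext ^ 2 ≤ β' := by
  have h2m : (0:ℝ) < 2 ^ m := by positivity
  set x : ℝ := 1 / 2 ^ m with hxdef
  have hx0 : 0 < x := by positivity
  have hx1 : x ≤ 1 := by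
    rw [hxdef, div_le_one h2m]
    exact one_le_pow₀ (by norm_num : (1:ℝ) ≤ 2)
  set c : ℝ := η * β' / 2 ^ m with hcdef
  have hc0 : 0 ≤ c := by positivity
  have hcx : c ≤ x / 12 := by
    have h1 : η * β' / 2 ^ m ≤ (1 / 12) / 2 ^ m := by gcongr
    rw [hcdef, hxdef]
    calc η * β' / 2 ^ m ≤ (1 / 12) / 2 ^ m := h1
      _ = (1 / 2 ^ m) / 12 := by ring
  have hx2 : (1:ℝ) / 2 ^ (m + 1) = x / 2 := by
    rw [hxdef]; rw [pow_succ]; ring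
  have hx3 : η * β' ^ 2 / 2 ^ (m + 3) = c * β' / 8 := by
    rw [hcdef]; rw [pow_add]; push_cast; ring
  have hv2 : v ^ 2 ≤ c * β' / 8 := hv.trans (hα.trans_eq hx3)
  have hstep : wnext ^ 2 - vnext ^ 2 ≤ (1 + c) ^ 2 * (w ^ 2 - v ^ 2) + 4 * c * v ^ 2 := by
    nlinarith [hwnext, hvnext]
  have hband : (1 + c) ^ 2 * (w ^ 2 - v ^ 2) ≤ (1 + c) ^ 2 * ((1 - x / 2) * β') := by
    apply mul_le_mul_of_nonneg_left _ (by positivity)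
    rw [← hx2]; exact hband_hi
  have hterm : 4 * c * v ^ 2 ≤ c ^ 2 * β' / 2 := by
    nlinarith [mul_le_mul_of_nonneg_left hv2 (by linarith : (0:ℝ) ≤ 4 * c)]
  have key : (1 + c) ^ 2 * (1 - x / 2) + c ^ 2 / 2 ≤ 1 := by
    have h12 : 12 * c ≤ x := by linarith
    nlinarith [mul_nonneg (sub_nonneg.2 h12) hc0, mul_nonneg (sub_nonneg.2 h12) hx0.le,
      mul_nonneg hc0 (sub_nonneg.2 hx1), sq_nonneg c, mul_nonneg (mul_nonneg hc0 hc0) hx0.le]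
  have key' : (1 + c) ^ 2 * ((1 - x / 2) * β') + c ^ 2 * β' / 2 ≤ β' := by
    have := mul_le_mul_of_nonneg_right key hβ'.le
    nlinarith [this]
  linarith [hstep, hband, hterm, key']
end

section
/- Let α ∈ [0, π/2], let Z and ζ be independent standard Gaussian random variables, let f : ℝ → ℝ be differentiable with |f'(x)| ≤ C + |x|^{α₁} for some C > 0 and α₁ ∈ (0,1], and set Z* = cos α·Z + sin α·ζ, g(z) = E[f(cos α·z + sin α·ζ)]. Then E[(f(Z*) - g(Z))²·1_{|Z| ≤ R}] ≤ C'·sin²α for a constant C' depending only on C and R (polynomially). -/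
/-!
The growth bound on `f'` and the mean value theorem give
`|f u - f v| ≤ (C + 1 + |u| + |v|) * |u - v|`. For `|z| ≤ R`, the point
`Z* = cos a * z + sin a * y` and each point `cos a * z + sin a * ζ` averaged in `g z` differ by
`sin a * (y - ζ)`, so averaging over `ζ` (with `E ζ² = 1`) gives
`|f Z* - g z| ≤ 3 (C + 2 + 2R) |sin a| (1 + y²)`, whose square has finite Gaussian mean.
-/

open MeasureTheory ProbabilityTheory Real

lemma Real.rpow_le_one_add {x α : ℝ} (hx : 0 ≤ x) (hα₀ : 0 ≤ α) (hα₁ : α ≤ 1) :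
    x ^ α ≤ 1 + x := by
  rcases le_total x 1 with hx1 | hx1
  · linarith [Real.rpow_le_one hx hx1 hα₀]
  · linarith [Real.rpow_le_self_of_one_le hx1 hα₁]

lemma abs_sub_le_mul_of_abs_deriv_le_add_abs {f : ℝ → ℝ} {A : ℝ} (hf : Differentiable ℝ f)
    (hf' : ∀ x, |deriv f x| ≤ A + |x|) (u v : ℝ) :
    |f u - f v| ≤ (A + |u| + |v|) * |u - v| := by
  have hbound : ∀ x ∈ Set.uIcc v u, ‖deriv f x‖ ≤ A + |u| + |v| := by
    intro x hx
    have hx' : |x| ≤ max |u| |v| := by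
      rcases Set.mem_uIcc.mp hx with ⟨h₁, h₂⟩ | ⟨h₁, h₂⟩
      · exact max_comm |v| |u| ▸ abs_le_max_abs_abs h₁ h₂
      · exact abs_le_max_abs_abs h₁ h₂
    rw [Real.norm_eq_abs]
    linarith [hf' x, max_le_add_of_nonneg (abs_nonneg u) (abs_nonneg v)]
  simpa only [Real.norm_eq_abs] using Convex.norm_image_sub_le_of_norm_deriv_le
    (fun x _ => hf.differentiableAt) hbound (convex_uIcc v u) Set.left_mem_uIcc Set.right_mem_uIcc

lemma integrable_pow_gaussianReal (μ : ℝ) (v : NNReal) (n : ℕ) :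
    Integrable (fun x => x ^ n) (gaussianReal μ v) :=
  integrable_pow_of_mem_interior_integrableExpSet (X := id) (by simp) n

lemma integral_sq_gaussianReal (v : NNReal) : ∫ x, x ^ 2 ∂gaussianReal 0 v = v := by
  have h := variance_fun_id_gaussianReal (μ := 0) (v := v)
  rw [variance_eq_integral measurable_id'.aemeasurable] at h
  simpa using h

lemma integrable_one_add_sq_sq_gaussianReal (μ : ℝ) (v : NNReal) :
    Integrable (fun y : ℝ => (1 + y ^ 2) ^ 2) (gaussianReal μ v) := by
  refine (((integrable_const 1).add ((integrable_pow_gaussianReal μ v 2).const_mul 2)).add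
    (integrable_pow_gaussianReal μ v 4)).congr (ae_of_all _ fun y => ?_)
  simp only [Pi.add_apply]
  ring

section GaussianSmoothing

variable {f : ℝ → ℝ} {A : ℝ}
  (hf_lip : ∀ u v, |f u - f v| ≤ (A + |u| + |v|) * |u - v|)
include hf_lip

lemma abs_sub_comp_affine_le (hA : 0 ≤ A) {s : ℝ} (hs : |s| ≤ 1) (b y t : ℝ) :
    |f (b + s * y) - f (b + s * t)| ≤ (A + 2 * |b| + 1) * |s| * (1 + 2 * y ^ 2 + 2 * t ^ 2) := by
  set K := A + 2 * |b|
  set w := |y| + |t|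
  have hK : 0 ≤ K := by positivity
  have hsy : |s * y| ≤ |y| := by rw [abs_mul]; exact mul_le_of_le_one_left (abs_nonneg _) hs
  have hst : |s * t| ≤ |t| := by rw [abs_mul]; exact mul_le_of_le_one_left (abs_nonneg _) hs
  have hfactor : A + |b + s * y| + |b + s * t| ≤ K + w := by
    linarith [abs_add_le b (s * y), abs_add_le b (s * t)]
  have hdiff : |(b + s * y) - (b + s * t)| ≤ |s| * w := by
    rw [show (b + s * y) - (b + s * t) = s * (y - t) by ring, abs_mul]
    exact mul_le_mul_of_nonneg_left (abs_sub _ _) (abs_nonneg s)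
  have hw : (K + w) * w ≤ (K + 1) * (1 + 2 * y ^ 2 + 2 * t ^ 2) := by
    have hw2 : w ^ 2 ≤ 2 * y ^ 2 + 2 * t ^ 2 := by
      nlinarith [sq_abs y, sq_abs t, sq_nonneg (|y| - |t|)]
    have hw1 : w ≤ 1 + w ^ 2 := by nlinarith [sq_nonneg (w - 1)]
    nlinarith [mul_le_mul_of_nonneg_left hw1 hK, sq_nonneg y, sq_nonneg t]
  calc |f (b + s * y) - f (b + s * t)|
      ≤ (K + w) * (|s| * w) :=
        (hf_lip _ _).trans (mul_le_mul hfactor hdiff (abs_nonneg _) (by positivity))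
    _ = |s| * ((K + w) * w) := by ring
    _ ≤ |s| * ((K + 1) * (1 + 2 * y ^ 2 + 2 * t ^ 2)) :=
        mul_le_mul_of_nonneg_left hw (abs_nonneg s)
    _ = (K + 1) * |s| * (1 + 2 * y ^ 2 + 2 * t ^ 2) := by ring

variable (hf : Continuous f) (hA : 0 ≤ A) {s : ℝ} (hs : |s| ≤ 1)
include hf hA hs

lemma integrable_comp_affine_gaussianReal (b : ℝ) :
    Integrable (fun t => f (b + s * t)) (gaussianReal 0 1) := by
  have hdom : Integrable (fun t => (A + 2 * |b| + 1) * |s| * (1 + 2 * 0 ^ 2 + 2 * t ^ 2))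
      (gaussianReal 0 1) :=
    ((integrable_const _).add ((integrable_pow_gaussianReal 0 1 2).const_mul 2)).const_mul _
  have hsub : Integrable (fun t => f (b + s * t) - f (b + s * 0)) (gaussianReal 0 1) :=
    hdom.mono' (by fun_prop) (ae_of_all _ fun t => by
      rw [Real.norm_eq_abs, abs_sub_comm]
      exact abs_sub_comp_affine_le hf_lip hA hs b 0 t)
  exact (hsub.add (integrable_const _)).congr (ae_of_all _ fun t => sub_add_cancel _ _)

lemma abs_sub_integral_comp_affine_gaussianReal_le (b y : ℝ) :
    |f (b + s * y) - ∫ t, f (b + s * t) ∂gaussianReal 0 1| ≤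
      3 * (A + 2 * |b| + 1) * |s| * (1 + y ^ 2) := by
  have hpoly : Integrable (fun t => 1 + 2 * y ^ 2 + 2 * t ^ 2) (gaussianReal 0 1) :=
    (integrable_const _).add ((integrable_pow_gaussianReal 0 1 2).const_mul 2)
  have hc : 0 ≤ (A + 2 * |b| + 1) * |s| := by positivity
  calc |f (b + s * y) - ∫ t, f (b + s * t) ∂gaussianReal 0 1|
      = |∫ t, (f (b + s * y) - f (b + s * t)) ∂gaussianReal 0 1| := by
        rw [integral_sub (integrable_const _)
          (integrable_comp_affine_gaussianReal hf_lip hf hA hs b), integral_const]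
        simp
    _ ≤ ∫ t, |f (b + s * y) - f (b + s * t)| ∂gaussianReal 0 1 :=
        abs_integral_le_integral_abs
    _ ≤ ∫ t, (A + 2 * |b| + 1) * |s| * (1 + 2 * y ^ 2 + 2 * t ^ 2) ∂gaussianReal 0 1 :=
        integral_mono_of_nonneg (ae_of_all _ fun _ => abs_nonneg _) (hpoly.const_mul _)
          (ae_of_all _ (abs_sub_comp_affine_le hf_lip hA hs b y))
    _ = (A + 2 * |b| + 1) * |s| * (3 + 2 * y ^ 2) := by
        rw [integral_const_mul, integral_add (integrable_const _)
          ((integrable_pow_gaussianReal 0 1 2).const_mul 2), integral_const, integral_const_mul,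
          integral_sq_gaussianReal]
        simp only [probReal_univ, smul_eq_mul, NNReal.coe_one]
        ring
    _ ≤ 3 * (A + 2 * |b| + 1) * |s| * (1 + y ^ 2) := by nlinarith [sq_nonneg y]

lemma sq_sub_integral_comp_affine_gaussianReal_le {b R : ℝ} (hb : |b| ≤ R) (y : ℝ) :
    (f (b + s * y) - ∫ t, f (b + s * t) ∂gaussianReal 0 1) ^ 2 ≤
      s ^ 2 * ((3 * (A + 2 * R + 1)) ^ 2 * (1 + y ^ 2) ^ 2) := by
  have h := (abs_sub_integral_comp_affine_gaussianReal_le hf_lip hf hA hs b y).trans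
    (show 3 * (A + 2 * |b| + 1) * |s| * (1 + y ^ 2) ≤ 3 * (A + 2 * R + 1) * |s| * (1 + y ^ 2) by
      gcongr)
  calc _ ≤ (3 * (A + 2 * R + 1) * |s| * (1 + y ^ 2)) ^ 2 :=
        sq_le_sq' (abs_le.mp h).1 (abs_le.mp h).2
    _ = s ^ 2 * ((3 * (A + 2 * R + 1)) ^ 2 * (1 + y ^ 2) ^ 2) := by
        rw [mul_pow, mul_pow, mul_pow, sq_abs]; ring

end GaussianSmoothing

theorem misspecified_approximation_error_general (C R : ℝ) (hC : 0 < C) :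
    ∃ C' : ℝ, 0 ≤ C' ∧
      ∀ α₁ : ℝ, 0 < α₁ → α₁ ≤ 1 →
      ∀ f : ℝ → ℝ, Differentiable ℝ f → (∀ x, |deriv f x| ≤ C + |x| ^ α₁) →
      ∀ a : ℝ, a ∈ Set.Icc 0 (Real.pi / 2) →
        (∫ p : ℝ × ℝ,
            (if |p.1| ≤ R then
              (f (Real.cos a * p.1 + Real.sin a * p.2) -
                ∫ ζ, f (Real.cos a * p.1 + Real.sin a * ζ) ∂(gaussianReal 0 1)) ^ 2
            else 0)
          ∂((gaussianReal 0 1).prod (gaussianReal 0 1))) ≤ C' * (Real.sin a) ^ 2 := by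
  set M := 3 * (C + 1 + 2 * R + 1)
  refine ⟨M ^ 2 * ∫ y, (1 + y ^ 2) ^ 2 ∂gaussianReal 0 1, by positivity, ?_⟩
  rintro α₁ hα₀ hα₁ f hf hf' a -
  have hf_lip := abs_sub_le_mul_of_abs_deriv_le_add_abs (A := C + 1) hf fun x =>
    (hf' x).trans (by linarith [Real.rpow_le_one_add (abs_nonneg x) hα₀.le hα₁])
  have hpointwise : ∀ p : ℝ × ℝ,
      (if |p.1| ≤ R then
        (f (cos a * p.1 + sin a * p.2) -
          ∫ ζ, f (cos a * p.1 + sin a * ζ) ∂(gaussianReal 0 1)) ^ 2 else 0) ≤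
        sin a ^ 2 * (M ^ 2 * (1 + p.2 ^ 2) ^ 2) := by
    rintro ⟨z, y⟩
    split_ifs with hz
    · have hb : |cos a * z| ≤ R := by
        rw [abs_mul]; exact mul_le_of_le_one_left (abs_nonneg z) (abs_cos_le_one a) |>.trans hz
      exact sq_sub_integral_comp_affine_gaussianReal_le hf_lip hf.continuous (by linarith)
        (abs_sin_le_one a) hb y
    · positivity
  have hdom : Integrable (fun y : ℝ => sin a ^ 2 * (M ^ 2 * (1 + y ^ 2) ^ 2))
      (gaussianReal 0 1) :=
    ((integrable_one_add_sq_sq_gaussianReal 0 1).const_mul _).const_mul _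
  calc _ ≤ ∫ p : ℝ × ℝ, sin a ^ 2 * (M ^ 2 * (1 + p.2 ^ 2) ^ 2)
          ∂(gaussianReal 0 1).prod (gaussianReal 0 1) :=
        integral_mono_of_nonneg (ae_of_all _ fun p => by split_ifs <;> positivity)
          (hdom.comp_snd _) (ae_of_all _ hpointwise)
    _ = _ := by
        rw [integral_fun_snd (fun y => sin a ^ 2 * (M ^ 2 * (1 + y ^ 2) ^ 2)),
          integral_const_mul, integral_const_mul]
        simp only [probReal_univ, one_smul]
        ring

/-- Approximation-error bound for kernel regression in a misspecified single index
model: with `Z, ζ` independent standard Gaussians, `Z* = cos α·Z + sin α·ζ`, and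
`g(z) = E[f(cos α·z + sin α·ζ)]`, one has
`E[(f(Z*) - g(Z))²·1_{|Z| ≤ R}] ≤ C'·sin²α` for a constant `C'` depending only on
`C` and `R`. -/
theorem misspecified_approximation_error (C R : ℝ) (hC : 0 < C) (hR : 0 < R) :
    ∃ C' : ℝ, 0 ≤ C' ∧
      ∀ α₁ : ℝ, 0 < α₁ → α₁ ≤ 1 →
      ∀ f : ℝ → ℝ, Differentiable ℝ f → (∀ x, |deriv f x| ≤ C + |x| ^ α₁) →
      ∀ a : ℝ, a ∈ Set.Icc 0 (Real.pi / 2) →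
        (∫ p : ℝ × ℝ,
            (if |p.1| ≤ R then
              (f (Real.cos a * p.1 + Real.sin a * p.2) -
                ∫ ζ, f (Real.cos a * p.1 + Real.sin a * ζ) ∂(gaussianReal 0 1)) ^ 2
            else 0)
          ∂((gaussianReal 0 1).prod (gaussianReal 0 1))) ≤ C' * (Real.sin a) ^ 2 :=
  misspecified_approximation_error_general C R hC
end
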